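/- arXiv:0810.2688 — 2 statements merged into one kernel-verified Lean document; each statement's English description precedes it below -/
import Mathlib

section
/- Let T ∈ (0,∞], let b : [0,T) → ℝ and σ : [0,T) → (0,∞) be continuous, let α ∈ ℝ, and suppose lim_{t↑T} (b(t)/σ(t)²)·exp{2α∫₀ᵗ b(w) dw} = C for some C ∈ ℝ with C ≠ 0. Then lim_{t↑T} ∫₀ᵗ |b(v)| dv = ∞ if and only if lim_{t↑T} ∫₀ᵗ σ(s)²·exp{−2α∫₀ˢ b(v) dv} ds = ∞. -/
/-!
Write `B t = ∫₀ᵗ b` and `g = σ² exp(−2αB)`. Then `|b| = |r| g` with `r = b σ⁻² exp(2αB) → C ≠ 0`,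
so near `T` the nonnegative functions `|b|` and `g` are comparable up to the constants `|C|/2` and
`2|C|`, and so their primitives diverge together.
-/

open MeasureTheory Filter Set Topology intervalIntegral

/-- The filter of real numbers `t` approaching `T ∈ (0,∞]` from below
(`atTop` when `T = ⊤`, `𝓝[<] T` when `T` is finite). -/
noncomputable def upFilter (T : EReal) : Filter ℝ :=
  Filter.comap (fun x : ℝ => (x : EReal)) (𝓝[<] T)

section UpFilter

variable {T : EReal}

theorem eventually_mem_Ioo_upFilter {a : ℝ} (ha : (a : EReal) < T) :
    ∀ᶠ s in upFilter T, a < s ∧ (s : EReal) < T :=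
  preimage_mem_comap (Ioo_mem_nhdsLT ha) |> mem_of_superset <| fun _ hs =>
    ⟨EReal.coe_lt_coe_iff.1 hs.1, hs.2⟩

theorem exists_forall_of_eventually_upFilter (hT : 0 < T) {p : ℝ → Prop}
    (h : ∀ᶠ s in upFilter T, p s) :
    ∃ t₀ : ℝ, 0 ≤ t₀ ∧ (t₀ : EReal) < T ∧ ∀ s : ℝ, t₀ ≤ s → (s : EReal) < T → p s := by
  obtain ⟨a, haT, ha⟩ := ((nhdsLT_basis_of_exists_lt ⟨0, hT⟩).comap _).eventually_iff.1 h
  obtain ⟨t₀, hat₀, ht₀T⟩ := EReal.lt_iff_exists_real_btwn.1 (max_lt haT hT)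
  refine ⟨t₀, by exact_mod_cast (le_max_right a 0).trans hat₀.le, ht₀T,
    fun s hs hsT => ha ⟨?_, hsT⟩⟩
  exact (le_max_left a 0).trans_lt (hat₀.trans_le (EReal.coe_le_coe_iff.2 hs))

theorem tendsto_integral_upFilter_of_eventually_const_mul_le (hT : 0 < T) {f g : ℝ → ℝ} {c : ℝ}
    (hc : 0 < c) (hf : ∀ t : ℝ, 0 ≤ t → (t : EReal) < T → IntervalIntegrable f volume 0 t)
    (hg : ∀ t : ℝ, 0 ≤ t → (t : EReal) < T → IntervalIntegrable g volume 0 t)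
    (hle : ∀ᶠ s in upFilter T, c * g s ≤ f s)
    (hG : Tendsto (fun t => ∫ s in (0 : ℝ)..t, g s) (upFilter T) atTop) :
    Tendsto (fun t => ∫ s in (0 : ℝ)..t, f s) (upFilter T) atTop := by
  obtain ⟨t₀, ht₀, ht₀T, hle⟩ := exists_forall_of_eventually_upFilter hT hle
  have key : ∀ t : ℝ, t₀ ≤ t → (t : EReal) < T →
      (∫ s in (0 : ℝ)..t₀, f s) - c * (∫ s in (0 : ℝ)..t₀, g s) + c * ∫ s in (0 : ℝ)..t, g s ≤
        ∫ s in (0 : ℝ)..t, f s := by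
    intro t ht htT
    have ht0 := ht₀.trans ht
    have hmono : c * ∫ s in t₀..t, g s ≤ ∫ s in t₀..t, f s := by
      rw [← intervalIntegral.integral_const_mul]
      refine integral_mono_on ht (((hg t₀ ht₀ ht₀T).symm.trans (hg t ht0 htT)).const_mul c)
        ((hf t₀ ht₀ ht₀T).symm.trans (hf t ht0 htT)) fun s hs => hle s hs.1 ?_
      exact (EReal.coe_le_coe_iff.2 hs.2).trans_lt htT
    rw [← integral_interval_sub_left (hg t ht0 htT) (hg t₀ ht₀ ht₀T),
      ← integral_interval_sub_left (hf t ht0 htT) (hf t₀ ht₀ ht₀T)] at hmono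
    linarith
  refine tendsto_atTop_mono' _ ?_ <| tendsto_atTop_add_const_left _
    ((∫ s in (0 : ℝ)..t₀, f s) - c * ∫ s in (0 : ℝ)..t₀, g s) (hG.const_mul_atTop hc)
  filter_upwards [eventually_mem_Ioo_upFilter ht₀T] with t ht using key t ht.1.le ht.2

theorem Icc_zero_subset_of_lt {t : ℝ} (ht : (t : EReal) < T) :
    Icc 0 t ⊆ {s : ℝ | 0 ≤ s ∧ (s : EReal) < T} :=
  fun _ hs => ⟨hs.1, (EReal.coe_le_coe_iff.2 hs.2).trans_lt ht⟩

end UpFilter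

theorem ContinuousOn.continuousOn_primitive_Icc {f : ℝ → ℝ} {a t : ℝ} (hat : a ≤ t)
    (hf : ContinuousOn f (Icc a t)) : ContinuousOn (fun x => ∫ y in a..x, f y) (Icc a t) := by
  rw [← uIcc_of_le hat] at hf ⊢
  exact continuousOn_primitive_interval (hf.integrableOn_compact isCompact_uIcc)

theorem abs_eq_abs_div_sq_mul_exp_mul (b : ℝ) {σ : ℝ} (hσ : σ ≠ 0) (a y : ℝ) :
    |b| = |b / σ ^ 2 * Real.exp (a * y)| * (σ ^ 2 * Real.exp (-a * y)) := by
  rw [← abs_of_pos (by positivity : 0 < σ ^ 2 * Real.exp (-a * y)), ← abs_mul]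
  congr 1
  rw [neg_mul, Real.exp_neg]
  field_simp

/-- Under condition (2.6), `∫₀ᵗ |b(v)| dv → ∞` as `t ↑ T` iff
`∫₀ᵗ σ(s)² exp{−2α ∫₀ˢ b(v) dv} ds → ∞` as `t ↑ T`. -/
theorem intAbs_atTop_iff_intSigma_atTop (T : EReal) (hT : 0 < T)
    (b σ : ℝ → ℝ) (α : ℝ) (C : ℝ) (hC : C ≠ 0)
    (hb : ContinuousOn b {t : ℝ | 0 ≤ t ∧ (t : EReal) < T})
    (hσ : ContinuousOn σ {t : ℝ | 0 ≤ t ∧ (t : EReal) < T})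
    (hσpos : ∀ t : ℝ, 0 ≤ t → (t : EReal) < T → 0 < σ t)
    (hlim : Tendsto
      (fun t : ℝ => b t / (σ t) ^ 2 * Real.exp (2 * α * ∫ w in (0:ℝ)..t, b w))
      (upFilter T) (𝓝 C)) :
    Tendsto (fun t : ℝ => ∫ v in (0:ℝ)..t, |b v|) (upFilter T) atTop ↔
      Tendsto
        (fun t : ℝ =>
          ∫ s in (0:ℝ)..t, (σ s) ^ 2 * Real.exp (-(2 * α) * ∫ v in (0:ℝ)..s, b v))
        (upFilter T) atTop := by
  set B : ℝ → ℝ := fun s => ∫ v in (0 : ℝ)..s, b v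
  set g : ℝ → ℝ := fun s => σ s ^ 2 * Real.exp (-(2 * α) * B s)
  set r : ℝ → ℝ := fun s => b s / σ s ^ 2 * Real.exp (2 * α * B s)
  have hbI : ∀ t : ℝ, 0 ≤ t → (t : EReal) < T → IntervalIntegrable (fun v => |b v|) volume 0 t :=
    fun t ht0 htT => ((hb.mono (Icc_zero_subset_of_lt htT)).abs).intervalIntegrable_of_Icc ht0
  have hgI : ∀ t : ℝ, 0 ≤ t → (t : EReal) < T → IntervalIntegrable g volume 0 t := by
    intro t ht0 htT
    have hB := (hb.mono (Icc_zero_subset_of_lt htT)).continuousOn_primitive_Icc ht0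
    refine ContinuousOn.intervalIntegrable_of_Icc ht0 <|
      ((hσ.mono (Icc_zero_subset_of_lt htT)).pow 2).mul
        (Real.continuous_exp.comp_continuousOn (continuousOn_const.mul hB))
  have hg0 : ∀ s, 0 ≤ g s := fun s => by positivity
  have hbg : ∀ᶠ s in upFilter T, |b s| = |r s| * g s := by
    filter_upwards [eventually_mem_Ioo_upFilter (a := 0) (by exact_mod_cast hT)] with s hs
    exact abs_eq_abs_div_sq_mul_exp_mul _ (hσpos s hs.1.le hs.2).ne' _ _
  have hCpos : 0 < |C| := abs_pos.2 hC
  constructor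
  · intro hbT
    refine tendsto_integral_upFilter_of_eventually_const_mul_le hT (c := (2 * |C|)⁻¹)
      (by positivity) hgI hbI ?_ hbT
    filter_upwards [hbg, hlim.abs.eventually_lt_const (by linarith : |C| < 2 * |C|)] with s hs hr
    rw [hs, inv_mul_le_iff₀ (by positivity)]
    exact mul_le_mul_of_nonneg_right hr.le (hg0 s)
  · intro hgT
    refine tendsto_integral_upFilter_of_eventually_const_mul_le hT (c := |C| / 2)
      (by positivity) hbI hgI ?_ hgT
    filter_upwards [hbg, hlim.abs.eventually_const_lt (half_lt_self hCpos)] with s hs hr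
    rw [hs]
    exact mul_le_mul_of_nonneg_right hr.le (hg0 s)
end

section
/- Let T ∈ (0,∞], let b : [0,T) → ℝ and σ : [0,T) → (0,∞) be continuous, and let α ∈ ℝ. Suppose lim_{t↑T} I_α(t) = ∞, lim_{t↑T} (b(t)/σ(t)²)·exp{2α∫₀ᵗ b(w) dw} = C for some C ∈ ℝ with C ≠ 0, and either α = 0, or α and C have the same sign. Then lim_{t↑T} ∫₀ᵗ σ(s)² ds = ∞. -/
open MeasureTheory Filter Set Topology intervalIntegral

/-- The Fisher information
`I_α(t) = ∫₀ᵗ (b(s)²/σ(s)²) · (∫₀ˢ σ(u)² · exp{2α ∫ᵤˢ b(v) dv} du) ds`. -/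
noncomputable def fisherInfo (b σ : ℝ → ℝ) (α : ℝ) (t : ℝ) : ℝ :=
  ∫ s in (0:ℝ)..t, (b s) ^ 2 / (σ s) ^ 2 *
    ∫ u in (0:ℝ)..s, (σ u) ^ 2 * Real.exp (2 * α * ∫ v in u..s, b v)

open Real

lemma tendsto_atTop_of_le_monotoneOn {ι β γ : Type*} [LinearOrder β] [Preorder γ] [NoMaxOrder γ]
    {l : Filter ι} {f : ι → γ} {g : ι → β} {φ : β → γ} {c : β} (hφ : MonotoneOn φ (Ici c))
    (hf : Tendsto f l atTop) (hfg : ∀ᶠ x in l, c ≤ g x ∧ f x ≤ φ (g x)) :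
    Tendsto g l atTop := by
  refine tendsto_atTop.2 fun R => ?_
  filter_upwards [hfg, hf.eventually_gt_atTop (φ (max R c))] with x ⟨hcg, hfx⟩ hφf
  by_contra! hgR
  exact (hφf.trans_le hfx).not_ge
    (hφ hcg (le_max_right R c) (hgR.le.trans (le_max_left R c)))

lemma eventually_upFilter_iff {T : EReal} (hT : ⊥ < T) {p : ℝ → Prop} :
    (∀ᶠ t in upFilter T, p t) ↔
      ∃ a : ℝ, (a : EReal) < T ∧ ∀ t : ℝ, a ≤ t → (t : EReal) < T → p t := by
  constructor
  · intro h
    obtain ⟨u, hu, hsub⟩ := mem_comap.1 h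
    obtain ⟨l, hl, hlu⟩ := (mem_nhdsLT_iff_exists_Ioo_subset' hT).1 hu
    obtain ⟨a, hla, haT⟩ := EReal.lt_iff_exists_real_btwn.1 hl
    exact ⟨a, haT, fun t hat htT => hsub (hlu ⟨hla.trans_le (EReal.coe_le_coe_iff.2 hat), htT⟩)⟩
  · rintro ⟨a, haT, ha⟩
    refine mem_of_superset (preimage_mem_comap (Ioo_mem_nhdsLT haT)) fun t ht => ?_
    exact ha t (EReal.coe_lt_coe_iff.1 ht.1).le ht.2

lemma integral_mul_exp_integral_eq {f b : ℝ → ℝ} {a s c : ℝ}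
    (hb : IntervalIntegrable b volume a s) :
    ∫ u in a..s, f u * exp (c * ∫ v in u..s, b v) =
      exp (c * ∫ v in a..s, b v) * ∫ u in a..s, f u * exp (-(c * ∫ v in a..u, b v)) := by
  rw [← intervalIntegral.integral_const_mul]
  refine intervalIntegral.integral_congr fun u hu => ?_
  rw [← intervalIntegral.integral_interval_sub_left hb
    (hb.mono_set (uIcc_subset_uIcc left_mem_uIcc hu)), mul_sub, sub_eq_add_neg, exp_add]
  ring

lemma ContinuousOn.continuousOn_primitive {f : ℝ → ℝ} {a t : ℝ}
    (hf : ContinuousOn f (Icc a t)) : ContinuousOn (fun x => ∫ u in a..x, f u) (Icc a t) :=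
  (intervalIntegral.continuousOn_primitive hf.integrableOn_Icc).congr fun _ hx =>
    intervalIntegral.integral_of_le hx.1

noncomputable def weightedVar (b σ : ℝ → ℝ) (α t : ℝ) : ℝ :=
  ∫ u in (0:ℝ)..t, σ u ^ 2 * exp (-(2 * α * ∫ v in (0:ℝ)..u, b v))

section CompactInterval

variable {b σ : ℝ → ℝ} {α s t₀ t : ℝ}

lemma continuousOn_sq_mul_exp_neg_integral (hb : ContinuousOn b (Icc 0 t))
    (hσ : ContinuousOn σ (Icc 0 t)) :
    ContinuousOn (fun u => σ u ^ 2 * exp (-(2 * α * ∫ v in (0:ℝ)..u, b v))) (Icc 0 t) :=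
  (hσ.pow 2).mul (continuous_exp.comp_continuousOn
    (continuousOn_const.mul hb.continuousOn_primitive).neg)

lemma integral_sq_mul_exp_integral_eq (hb : ContinuousOn b (Icc 0 t)) (hs : s ∈ Icc 0 t) :
    ∫ u in (0:ℝ)..s, σ u ^ 2 * exp (2 * α * ∫ v in u..s, b v) =
      exp (2 * α * ∫ v in (0:ℝ)..s, b v) * weightedVar b σ α s :=
  integral_mul_exp_integral_eq
    ((hb.mono (Icc_subset_Icc_right hs.2)).intervalIntegrable_of_Icc hs.1)

lemma intervalIntegrable_fisherInfo_integrand (ht : 0 ≤ t) (hb : ContinuousOn b (Icc 0 t))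
    (hσ : ContinuousOn σ (Icc 0 t)) (hσ0 : ∀ s ∈ Icc 0 t, σ s ≠ 0) :
    IntervalIntegrable (fun s => b s ^ 2 / σ s ^ 2 *
      ∫ u in (0:ℝ)..s, σ u ^ 2 * exp (2 * α * ∫ v in u..s, b v)) volume 0 t := by
  refine ContinuousOn.intervalIntegrable_of_Icc ht
    (((hb.pow 2).div (hσ.pow 2) fun s hs => pow_ne_zero 2 (hσ0 s hs)).mul ?_)
  exact ((continuous_exp.comp_continuousOn (continuousOn_const.mul
    hb.continuousOn_primitive)).mul
      (continuousOn_sq_mul_exp_neg_integral hb hσ).continuousOn_primitive).congr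
    fun s hs => integral_sq_mul_exp_integral_eq hb hs

end CompactInterval

section Estimates

variable {b σ : ℝ → ℝ} {α t₀ t : ℝ}

lemma exp_neg_integral_le_of_mul_nonneg (ht₀ : 0 ≤ t₀) (hb : ContinuousOn b (Icc 0 t))
    (hαb : ∀ s ∈ Icc t₀ t, 0 ≤ α * b s) :
    ∀ s ∈ Icc t₀ t, exp (-(2 * α * ∫ v in (0:ℝ)..s, b v)) ≤
      exp (-(2 * α * ∫ v in (0:ℝ)..t₀, b v)) := by
  intro s hs
  have hint : ∀ r ∈ Icc t₀ t, IntervalIntegrable b volume 0 r := fun r hr =>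
    (hb.mono (Icc_subset_Icc_right hr.2)).intervalIntegrable_of_Icc (ht₀.trans hr.1)
  have hincr : 0 ≤ α * ∫ v in t₀..s, b v := by
    rw [← intervalIntegral.integral_const_mul]
    exact intervalIntegral.integral_nonneg hs.1 fun v hv => hαb v ⟨hv.1, hv.2.trans hs.2⟩
  rw [← intervalIntegral.integral_interval_sub_left (hint s hs) (hint t₀ ⟨le_rfl, hs.1.trans hs.2⟩),
    mul_sub] at hincr
  exact exp_le_exp.2 (by linarith)

lemma weightedVar_sub_le (ht₀ : 0 ≤ t₀) (ht : t₀ ≤ t) (hb : ContinuousOn b (Icc 0 t))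
    (hσ : ContinuousOn σ (Icc 0 t)) {M : ℝ}
    (hM : ∀ s ∈ Icc t₀ t, exp (-(2 * α * ∫ v in (0:ℝ)..s, b v)) ≤ M) :
    weightedVar b σ α t - weightedVar b σ α t₀ ≤ M * ∫ s in t₀..t, σ s ^ 2 := by
  have hK := (continuousOn_sq_mul_exp_neg_integral (α := α) hb hσ).intervalIntegrable_of_Icc
    (μ := volume) (ht₀.trans ht)
  rw [weightedVar, weightedVar, intervalIntegral.integral_interval_sub_left hK
    (hK.mono_set (uIcc_subset_uIcc_left (mem_uIcc_of_le ht₀ ht))),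
    ← intervalIntegral.integral_const_mul]
  refine intervalIntegral.integral_mono_on ht
    (hK.mono_set (uIcc_subset_uIcc_right (mem_uIcc_of_le ht₀ ht))) ?_ fun s hs => ?_
  · exact (((hσ.pow 2).intervalIntegrable_of_Icc (ht₀.trans ht)).mono_set
      (uIcc_subset_uIcc_right (mem_uIcc_of_le ht₀ ht))).const_mul M
  · rw [mul_comm M]
    exact mul_le_mul_of_nonneg_left (hM s hs) (sq_nonneg _)

lemma fisherInfo_sub_le (ht₀ : 0 ≤ t₀) (ht : t₀ ≤ t) (hb : ContinuousOn b (Icc 0 t))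
    (hσ : ContinuousOn σ (Icc 0 t)) (hσ0 : ∀ s ∈ Icc 0 t, σ s ≠ 0) {G M : ℝ}
    (hG : ∀ s ∈ Icc t₀ t, (b s / σ s ^ 2 * exp (2 * α * ∫ v in (0:ℝ)..s, b v)) ^ 2 ≤ G)
    (hM : ∀ s ∈ Icc t₀ t, exp (-(2 * α * ∫ v in (0:ℝ)..s, b v)) ≤ M) :
    fisherInfo b σ α t - fisherInfo b σ α t₀ ≤
      G * M * weightedVar b σ α t * ∫ s in t₀..t, σ s ^ 2 := by
  have hF := intervalIntegrable_fisherInfo_integrand (α := α) (ht₀.trans ht) hb hσ hσ0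
  have hK := (continuousOn_sq_mul_exp_neg_integral (α := α) hb hσ).intervalIntegrable_of_Icc
    (μ := volume) (ht₀.trans ht)
  rw [fisherInfo, fisherInfo, intervalIntegral.integral_interval_sub_left hF
    (hF.mono_set (uIcc_subset_uIcc_left (mem_uIcc_of_le ht₀ ht))),
    ← intervalIntegral.integral_const_mul]
  refine intervalIntegral.integral_mono_on ht (hF.mono_set (uIcc_subset_uIcc_right
    (mem_uIcc_of_le ht₀ ht))) ?_ fun s hs => ?_
  · exact (((hσ.pow 2).intervalIntegrable_of_Icc (ht₀.trans ht)).mono_set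
      (uIcc_subset_uIcc_right (mem_uIcc_of_le ht₀ ht))).const_mul _
  have hs0 : s ∈ Icc 0 t := ⟨ht₀.trans hs.1, hs.2⟩
  have hKst : weightedVar b σ α s ≤ weightedVar b σ α t :=
    intervalIntegral.integral_mono_interval le_rfl hs0.1 hs.2
      (Eventually.of_forall fun _ => by simp only [Pi.zero_apply]; positivity) hK
  have hG0 : 0 ≤ G := (sq_nonneg _).trans (hG s hs)
  have hKs : 0 ≤ weightedVar b σ α s :=
    intervalIntegral.integral_nonneg hs0.1 fun _ _ => by positivity
  rw [integral_sq_mul_exp_integral_eq hb hs0]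
  calc b s ^ 2 / σ s ^ 2 * (exp (2 * α * ∫ v in (0:ℝ)..s, b v) * weightedVar b σ α s)
      = (b s / σ s ^ 2 * exp (2 * α * ∫ v in (0:ℝ)..s, b v)) ^ 2 *
          (exp (-(2 * α * ∫ v in (0:ℝ)..s, b v)) * σ s ^ 2) * weightedVar b σ α s := by
        rw [exp_neg]
        field_simp [hσ0 s hs0]
    _ ≤ G * (M * σ s ^ 2) * weightedVar b σ α t := by
        have hM0 : 0 ≤ M := (exp_pos _).le.trans (hM s hs)
        gcongr
        exacts [hG s hs, hM s hs]
    _ = G * M * weightedVar b σ α t * σ s ^ 2 := by ring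

lemma fisherInfo_le (ht₀ : 0 ≤ t₀) (ht : t₀ ≤ t) (hb : ContinuousOn b (Icc 0 t))
    (hσ : ContinuousOn σ (Icc 0 t)) (hσ0 : ∀ s ∈ Icc 0 t, σ s ≠ 0) {G M : ℝ}
    (hG : ∀ s ∈ Icc t₀ t, (b s / σ s ^ 2 * exp (2 * α * ∫ v in (0:ℝ)..s, b v)) ^ 2 ≤ G)
    (hM : ∀ s ∈ Icc t₀ t, exp (-(2 * α * ∫ v in (0:ℝ)..s, b v)) ≤ M) :
    fisherInfo b σ α t ≤ fisherInfo b σ α t₀ +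
      G * M * (weightedVar b σ α t₀ + M * ∫ s in (0:ℝ)..t, σ s ^ 2) *
        ∫ s in (0:ℝ)..t, σ s ^ 2 := by
  have htt : t ∈ Icc t₀ t := ⟨ht, le_rfl⟩
  have hG0 : 0 ≤ G := (sq_nonneg _).trans (hG t htt)
  have hM0 : 0 ≤ M := (exp_pos _).le.trans (hM t htt)
  have hS := (hσ.pow 2).intervalIntegrable_of_Icc (μ := volume) (ht₀.trans ht)
  have hΔ : ∫ s in t₀..t, σ s ^ 2 ≤ ∫ s in (0:ℝ)..t, σ s ^ 2 :=
    intervalIntegral.integral_mono_interval ht₀ ht le_rfl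
      (Eventually.of_forall fun _ => sq_nonneg _) hS
  have hK : weightedVar b σ α t ≤ weightedVar b σ α t₀ + M * ∫ s in (0:ℝ)..t, σ s ^ 2 := by
    linarith [weightedVar_sub_le ht₀ ht hb hσ hM, mul_le_mul_of_nonneg_left hΔ hM0]
  have hK0 : 0 ≤ weightedVar b σ α t :=
    intervalIntegral.integral_nonneg (ht₀.trans ht) fun _ _ => by positivity
  have hΔ0 : 0 ≤ ∫ s in t₀..t, σ s ^ 2 :=
    intervalIntegral.integral_nonneg ht fun _ _ => sq_nonneg _
  calc fisherInfo b σ α t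
      ≤ fisherInfo b σ α t₀ + G * M * weightedVar b σ α t * ∫ s in t₀..t, σ s ^ 2 := by
        linarith [fisherInfo_sub_le ht₀ ht hb hσ hσ0 hG hM]
    _ ≤ _ := by
        gcongr
        exact mul_nonneg (mul_nonneg hG0 hM0) (hK0.trans hK)

lemma exists_monotoneOn_fisherInfo_le {T : EReal} (ht₀ : 0 ≤ t₀) (ht₀T : (t₀ : EReal) < T)
    (hb : ContinuousOn b {t : ℝ | 0 ≤ t ∧ (t : EReal) < T})
    (hσ : ContinuousOn σ {t : ℝ | 0 ≤ t ∧ (t : EReal) < T})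
    (hσ0 : ∀ t : ℝ, 0 ≤ t → (t : EReal) < T → σ t ≠ 0)
    (hαb : ∀ s, t₀ ≤ s → (s : EReal) < T → 0 ≤ α * b s) {G : ℝ}
    (hG : ∀ s, t₀ ≤ s → (s : EReal) < T →
      (b s / σ s ^ 2 * exp (2 * α * ∫ v in (0:ℝ)..s, b v)) ^ 2 ≤ G) :
    ∃ φ : ℝ → ℝ, MonotoneOn φ (Ici 0) ∧ ∀ t, t₀ ≤ t → (t : EReal) < T →
      fisherInfo b σ α t ≤ φ (∫ s in (0:ℝ)..t, σ s ^ 2) := by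
  set M := exp (-(2 * α * ∫ v in (0:ℝ)..t₀, b v))
  have hG0 : 0 ≤ G := (sq_nonneg _).trans (hG t₀ le_rfl ht₀T)
  have hK0 : 0 ≤ weightedVar b σ α t₀ :=
    intervalIntegral.integral_nonneg ht₀ fun _ _ => by positivity
  refine ⟨fun x => fisherInfo b σ α t₀ + G * M * (weightedVar b σ α t₀ + M * x) * x,
    fun x hx y hy hxy => ?_, fun t ht htT => ?_⟩
  · have hM0 : 0 ≤ M := (exp_pos _).le
    dsimp only
    gcongr
    exact mul_nonneg (mul_nonneg hG0 hM0) (add_nonneg hK0 (mul_nonneg hM0 (hx.trans hxy)))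
  have hD : Icc 0 t ⊆ {t : ℝ | 0 ≤ t ∧ (t : EReal) < T} := fun s hs =>
    ⟨hs.1, (EReal.coe_le_coe_iff.2 hs.2).trans_lt htT⟩
  have hsT : ∀ s ∈ Icc t₀ t, (s : EReal) < T := fun s hs => (hD ⟨ht₀.trans hs.1, hs.2⟩).2
  exact fisherInfo_le ht₀ ht (hb.mono hD) (hσ.mono hD) (fun s hs => hσ0 s (hD hs).1 (hD hs).2)
    (fun s hs => hG s hs.1 (hsT s hs))
    (exp_neg_integral_le_of_mul_nonneg ht₀ (hb.mono hD) fun s hs => hαb s hs.1 (hsT s hs))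

end Estimates

/-- If `I_α(t) → ∞`, condition (2.6) holds with limit `C ≠ 0`, and either `α = 0` or
`α` and `C` have the same sign, then `∫₀ᵗ σ(s)² ds → ∞` as `t ↑ T`. -/
theorem sigma_sq_integral_atTop (T : EReal) (hT : 0 < T)
    (b σ : ℝ → ℝ) (α : ℝ) (C : ℝ) (hC : C ≠ 0)
    (hb : ContinuousOn b {t : ℝ | 0 ≤ t ∧ (t : EReal) < T})
    (hσ : ContinuousOn σ {t : ℝ | 0 ≤ t ∧ (t : EReal) < T})
    (hσpos : ∀ t : ℝ, 0 ≤ t → (t : EReal) < T → 0 < σ t)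
    (hI : Tendsto (fisherInfo b σ α) (upFilter T) atTop)
    (hlim : Tendsto
      (fun t : ℝ => b t / (σ t) ^ 2 * Real.exp (2 * α * ∫ w in (0:ℝ)..t, b w))
      (upFilter T) (𝓝 C))
    (hsign : α = 0 ∨ (0 < α ∧ 0 < C) ∨ (α < 0 ∧ C < 0)) :
    Tendsto (fun t : ℝ => ∫ s in (0:ℝ)..t, (σ s) ^ 2) (upFilter T) atTop := by
  have hαC : 0 ≤ α * C := by
    rcases hsign with rfl | ⟨hα, hC'⟩ | ⟨hα, hC'⟩ <;> nlinarith
  have hsgn := (hlim.const_mul C).eventually (lt_mem_nhds (mul_self_pos.2 hC))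
  have hsq := (hlim.pow 2).eventually (ge_mem_nhds (lt_add_one (C ^ 2)))
  obtain ⟨a, haT, ha⟩ := (eventually_upFilter_iff (bot_le.trans_lt hT)).1 (hsgn.and hsq)
  set t₀ := max a 0
  have ht₀T : (t₀ : EReal) < T :=
    EReal.coe_strictMono.monotone.map_max ▸ max_lt haT (EReal.coe_zero ▸ hT)
  have hαb : ∀ s, t₀ ≤ s → (s : EReal) < T → 0 ≤ α * b s := by
    intro s hs hsT
    have hσs := hσpos s ((le_max_right a 0).trans hs) hsT
    have hCbp : 0 < C * b s * (exp (2 * α * ∫ w in (0:ℝ)..s, b w) / σ s ^ 2) :=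
      (ha s ((le_max_left a 0).trans hs) hsT).1.trans_eq (by ring)
    have hCb := pos_of_mul_pos_left hCbp (by positivity)
    nlinarith [mul_nonneg hαC hCb.le, mul_self_pos.2 hC]
  obtain ⟨φ, hφ, hbound⟩ := exists_monotoneOn_fisherInfo_le (le_max_right a 0) ht₀T hb hσ
    (fun t h0 htT => (hσpos t h0 htT).ne') hαb
    fun s hs hsT => (ha s ((le_max_left a 0).trans hs) hsT).2
  refine tendsto_atTop_of_le_monotoneOn hφ hI ?_
  filter_upwards [(eventually_upFilter_iff (bot_le.trans_lt hT)
    (p := fun t => t₀ ≤ t ∧ (t : EReal) < T)).2 ⟨t₀, ht₀T, fun t ht htT => ⟨ht, htT⟩⟩]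
    with t ⟨ht, htT⟩
  exact ⟨intervalIntegral.integral_nonneg ((le_max_right a 0).trans ht) fun _ _ => sq_nonneg _,
    hbound t ht htT⟩
end
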